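/- arXiv:2012.04141 — 3 statements merged into one kernel-verified Lean document; each statement's English description precedes it below -/
import Mathlib

section
/- If x, y are real sequences (or streams) and i, j, ε are such that x_i + ε = y_i < y_j = x_j − ε with all other coordinates equal, then the sum of pairwise absolute differences over any finite index set containing both i and j is strictly larger for x than for y; more precisely, |x_i − x_j| = |y_i − y_j| + 2ε. -/
open Finset

private lemma key_abs (a b ε t : ℝ) (hε : 0 ≤ ε) (h : a + ε < b - ε) :
    |t - (a + ε)| + |t - (b - ε)| ≤ |t - a| + |t - b| := by
  rcases abs_cases (t - (a + ε)) with ⟨e1, s1⟩ | ⟨e1, s1⟩ <;>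
  rcases abs_cases (t - (b - ε)) with ⟨e2, s2⟩ | ⟨e2, s2⟩ <;>
  rcases abs_cases (t - a) with ⟨e3, s3⟩ | ⟨e3, s3⟩ <;>
  rcases abs_cases (t - b) with ⟨e4, s4⟩ | ⟨e4, s4⟩ <;>
  rw [e1, e2, e3, e4] <;> linarith

/-- A single Pigou-Dalton transfer of size ε between coordinates i and j:
the sum of pairwise absolute differences over any finite index set containing
both i and j is strictly larger for x than for y, and
`|x i - x j| = |y i - y j| + 2 ε`. -/
theorem pd_transfer_dispersion (x y : ℕ → ℝ) (i j : ℕ) (ε : ℝ)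
    (hε : 0 < ε) (hij : i ≠ j)
    (h1 : x i + ε = y i) (h2 : y i < y j) (h3 : y j = x j - ε)
    (h4 : ∀ k, k ≠ i → k ≠ j → x k = y k) :
    (∀ S : Finset ℕ, i ∈ S → j ∈ S →
      ∑ k ∈ S, ∑ l ∈ S, |y k - y l| < ∑ k ∈ S, ∑ l ∈ S, |x k - x l|) ∧
    |x i - x j| = |y i - y j| + 2 * ε := by
  have habs : |x i - x j| = |y i - y j| + 2 * ε := by
    rw [abs_of_nonpos (by linarith), abs_of_nonpos (by linarith)]; linarith
  have key : ∀ t : ℝ, |t - y i| + |t - y j| ≤ |t - x i| + |t - x j| := by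
    intro t
    have h := key_abs (x i) (x j) ε t hε.le (by linarith)
    rwa [h1, show x j - ε = y j from h3.symm] at h
  refine ⟨?_, habs⟩
  intro S hiS hjS
  set T := (S.erase i).erase j with hT
  have hjT : j ∉ T := notMem_erase _ _
  have hiT : i ∉ T := fun h => (mem_erase.mp (mem_erase.mp h).2).1 rfl
  have hSi : S = insert i (insert j T) := by
    rw [hT, insert_erase (mem_erase.mpr ⟨Ne.symm hij, hjS⟩), insert_erase hiS]
  have hiJT : i ∉ insert j T := by simp [mem_insert, hij, hiT]
  have expand : ∀ f : ℕ → ℝ, ∑ k ∈ S, f k = f i + (f j + ∑ k ∈ T, f k) := by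
    intro f
    rw [hSi, sum_insert hiJT, sum_insert hjT]
  have hTmem : ∀ k, k ∈ T → x k = y k := by
    intro k hk
    exact h4 k (mem_erase.mp (mem_erase.mp hk).2).1 (mem_erase.mp hk).1
  have E : ∀ z : ℕ → ℝ, ∑ k ∈ S, ∑ l ∈ S, |z k - z l|
      = (|z i - z j| + |z j - z i|)
        + (∑ l ∈ T, (|z i - z l| + |z j - z l|))
        + (∑ k ∈ T, (|z k - z i| + |z k - z j|))
        + (∑ k ∈ T, ∑ l ∈ T, |z k - z l|) := by
    intro z
    rw [expand (fun k => ∑ l ∈ S, |z k - z l|)]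
    rw [expand (fun l => |z i - z l|), expand (fun l => |z j - z l|),
      sum_congr rfl (fun k _ => expand (fun l => |z k - z l|)),
      sum_add_distrib, sum_add_distrib]
    simp only [sub_self, abs_zero, sum_add_distrib]
    ring
  rw [E x, E y]
  have hstrict : |y i - y j| + |y j - y i| < |x i - x j| + |x j - x i| := by
    rw [abs_sub_comm (x j), abs_sub_comm (y j)]; linarith
  have hA : ∑ l ∈ T, (|y i - y l| + |y j - y l|)
      ≤ ∑ l ∈ T, (|x i - x l| + |x j - x l|) := by
    apply sum_le_sum
    intro l hl
    rw [hTmem l hl, abs_sub_comm (y i), abs_sub_comm (y j),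
      abs_sub_comm (x i), abs_sub_comm (x j)]
    exact key (y l)
  have hB : ∑ k ∈ T, (|y k - y i| + |y k - y j|)
      ≤ ∑ k ∈ T, (|x k - x i| + |x k - x j|) := by
    apply sum_le_sum
    intro k hk
    rw [hTmem k hk]
    exact key (y k)
  have hC : ∑ k ∈ T, ∑ l ∈ T, |y k - y l| = ∑ k ∈ T, ∑ l ∈ T, |x k - x l| := by
    apply sum_congr rfl
    intro k hk
    apply sum_congr rfl
    intro l hl
    rw [hTmem k hk, hTmem l hl]
  linarith
end

section
/- Let a < b ≤ c < d with a + d = b + c and a' < b' ≤ c' < d' with a' + d' = b' + c'. Then |a − a'| + |a − d'| + |d − a'| + |d − d'| ≥ |b − b'| + |b − c'| + |c − b'| + |c − c'|. -/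
lemma pd_one (u v w x t : ℝ) (h1 : u < v) (h2 : v ≤ w) (h3 : w < x)
    (h4 : u + x = v + w) : |t - v| + |t - w| ≤ |t - u| + |t - x| := by
  rcases abs_cases (t - v) with ⟨e1, _⟩ | ⟨e1, _⟩ <;>
  rcases abs_cases (t - w) with ⟨e2, _⟩ | ⟨e2, _⟩ <;>
  rcases abs_cases (t - u) with ⟨e3, _⟩ | ⟨e3, _⟩ <;>
  rcases abs_cases (t - x) with ⟨e4, _⟩ | ⟨e4, _⟩ <;>
  linarith

/-- Cross-pair 'case 4' estimate: for two independent sum-preserving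
Pigou-Dalton transfers (a,d) → (b,c) and (a',d') → (b',c'), the sum of the
four cross absolute differences does not increase. -/
theorem pd_cross_pairs (a b c d a' b' c' d' : ℝ)
    (h1 : a < b) (h2 : b ≤ c) (h3 : c < d) (h4 : a + d = b + c)
    (h1' : a' < b') (h2' : b' ≤ c') (h3' : c' < d') (h4' : a' + d' = b' + c') :
    |b - b'| + |b - c'| + |c - b'| + |c - c'| ≤
    |a - a'| + |a - d'| + |d - a'| + |d - d'| := by
  have hb := pd_one a' b' c' d' b h1' h2' h3' h4'
  have hc := pd_one a' b' c' d' c h1' h2' h3' h4'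
  have ha' := pd_one a b c d a' h1 h2 h3 h4
  have hd' := pd_one a b c d d' h1 h2 h3 h4
  have e : ∀ x y : ℝ, |x - y| = |y - x| := fun x y => abs_sub_comm x y
  calc |b - b'| + |b - c'| + |c - b'| + |c - c'|
      ≤ (|b - a'| + |b - d'|) + (|c - a'| + |c - d'|) := by linarith
    _ = (|a' - b| + |a' - c|) + (|d' - b| + |d' - c|) := by rw [e b a', e b d', e c a', e c d']; ring
    _ ≤ (|a' - a| + |a' - d|) + (|d' - a| + |d' - d|) := by linarith
    _ = |a - a'| + |a - d'| + |d - a'| + |d - d'| := by rw [e a' a, e a' d, e d' a, e d' d]; ring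
end

section
/- Let a < b ≤ c < d with a + d = b + c, ε = b − a, and a' < b' ≤ c' < d' with a' + d' = b' + c', ε' = b' − a'. Then the sum of the five quantities |a−a'| + |a−d'| + |d−a'| + |d−d'| + |a−d| exceeds |b−b'| + |b−c'| + |c−b'| + |c−c'| + |b−c| by at least 2·min(ε, ε'). -/
lemma pd_key (a b c d t : ℝ) (h1 : a ≤ b) (h2 : b ≤ c) (h3 : c ≤ d)
    (h4 : a + d = b + c) : |b - t| + |c - t| ≤ |a - t| + |d - t| := by
  rcases abs_cases (b - t) with ⟨hb, hb'⟩ | ⟨hb, hb'⟩ <;>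
  rcases abs_cases (c - t) with ⟨hc, hc'⟩ | ⟨hc, hc'⟩ <;>
  rcases abs_cases (a - t) with ⟨ha, ha'⟩ | ⟨ha, ha'⟩ <;>
  rcases abs_cases (d - t) with ⟨hd, hd'⟩ | ⟨hd, hd'⟩ <;> linarith

/-- For two sum-preserving Pigou-Dalton transfers (a,d) → (b,c) and
(a',d') → (b',c') with sizes ε = b - a and ε' = b' - a', the sum of the four
cross terms plus the within-pair term for the first pair exceeds the
corresponding sum after the transfers by at least `2 * min ε ε'`. -/
theorem pd_five_terms (a b c d a' b' c' d' : ℝ)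
    (h1 : a < b) (h2 : b ≤ c) (h3 : c < d) (h4 : a + d = b + c)
    (h1' : a' < b') (h2' : b' ≤ c') (h3' : c' < d') (h4' : a' + d' = b' + c') :
    |b - b'| + |b - c'| + |c - b'| + |c - c'| + |b - c| + 2 * min (b - a) (b' - a') ≤
    |a - a'| + |a - d'| + |d - a'| + |d - d'| + |a - d| := by
  have kb := pd_key a b c d b' h1.le h2 h3.le h4
  have kc := pd_key a b c d c' h1.le h2 h3.le h4
  have ka : |b' - a| + |c' - a| ≤ |a' - a| + |d' - a| :=
    pd_key a' b' c' d' a h1'.le h2' h3'.le h4'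
  have kd : |b' - d| + |c' - d| ≤ |a' - d| + |d' - d| :=
    pd_key a' b' c' d' d h1'.le h2' h3'.le h4'
  rw [abs_sub_comm b' a, abs_sub_comm c' a, abs_sub_comm a' a, abs_sub_comm d' a] at ka
  rw [abs_sub_comm b' d, abs_sub_comm c' d, abs_sub_comm a' d, abs_sub_comm d' d] at kd
  have hbc : |b - c| = c - b := by rw [abs_sub_comm]; exact abs_of_nonneg (by linarith)
  have had : |a - d| = d - a := by rw [abs_sub_comm]; exact abs_of_nonneg (by linarith)
  have hmin : min (b - a) (b' - a') ≤ b - a := min_le_left _ _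
  linarith
end
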